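/- Let x_- < x_+ be real numbers, d = x_+ - x_-, y = (x_- + x_+)/2, and let α, λ ∈ ℝ. Then there exists a δ-Dirichlet eigenfunction for (α, λ) on [x_-, x_+] if and only if λ ∈ Π_d^D or (λ ∉ Π_d^D and F_d^D(λ) = α). -/

import Mathlib

/-- The set `Π_d^D = { (2πk/d)² : k ∈ ℕ, k ≥ 1 }`. -/
noncomputable def PiD (d : ℝ) : Set ℝ :=
  {x | ∃ k : ℕ, 1 ≤ k ∧ x = (2 * Real.pi * k / d) ^ 2}

/-- The function `F_d^D`. -/
noncomputable def FD (d lam : ℝ) : ℝ :=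
  if 0 < lam then
    -2 * Real.sqrt lam * (Real.cos (d * Real.sqrt lam / 2) / Real.sin (d * Real.sqrt lam / 2))
  else if lam = 0 then -4 / d
  else
    -2 * Real.sqrt (-lam) *
      (Real.cosh (d * Real.sqrt (-lam) / 2) / Real.sinh (d * Real.sqrt (-lam) / 2))

/-- `u` is a δ-Dirichlet eigenfunction for `(α, λ)` on `[x₋, x₊]`: `u` is continuous on
`[x₋, x₊]`, not identically zero there, its restrictions to `[x₋, y]` and `[y, x₊]`
(with `y` the midpoint) are twice continuously differentiable (encoded via `C²` extensions
`v`, `w`) and satisfy `-u'' = λ u` there, `u(x₋) = u(x₊) = 0`, and the one-sided derivatives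
at `y` satisfy `u'(y+0) - u'(y-0) = α u(y)`. -/
def IsDeltaDirichletEF (xm xp α lam : ℝ) (u : ℝ → ℂ) : Prop :=
  ContinuousOn u (Set.Icc xm xp) ∧
  (∃ x ∈ Set.Icc xm xp, u x ≠ 0) ∧
  u xm = 0 ∧ u xp = 0 ∧
  ∃ v w : ℝ → ℂ,
    ContDiff ℝ 2 v ∧ ContDiff ℝ 2 w ∧
    Set.EqOn u v (Set.Icc xm ((xm + xp) / 2)) ∧
    Set.EqOn u w (Set.Icc ((xm + xp) / 2) xp) ∧
    (∀ x ∈ Set.Icc xm ((xm + xp) / 2), -(deriv (deriv v) x) = (lam : ℂ) * v x) ∧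
    (∀ x ∈ Set.Icc ((xm + xp) / 2) xp, -(deriv (deriv w) x) = (lam : ℂ) * w x) ∧
    deriv w ((xm + xp) / 2) - deriv v ((xm + xp) / 2) = (α : ℂ) * u ((xm + xp) / 2)

noncomputable def Sf (lam t : ℝ) : ℝ :=
  if 0 < lam then Real.sin (Real.sqrt lam * t) / Real.sqrt lam
  else if lam = 0 then t
  else Real.sinh (Real.sqrt (-lam) * t) / Real.sqrt (-lam)

noncomputable def Cf (lam t : ℝ) : ℝ :=
  if 0 < lam then Real.cos (Real.sqrt lam * t)
  else if lam = 0 then 1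
  else Real.cosh (Real.sqrt (-lam) * t)

lemma Sf_zero (lam : ℝ) : Sf lam 0 = 0 := by
  unfold Sf; rcases lt_trichotomy 0 lam with h|h|h
  · simp [h]
  · subst h; simp
  · simp [not_lt.mpr h.le, ne_of_lt h]

lemma Cf_zero (lam : ℝ) : Cf lam 0 = 1 := by
  unfold Cf; rcases lt_trichotomy 0 lam with h|h|h
  · simp [h]
  · subst h; simp
  · simp [not_lt.mpr h.le, ne_of_lt h]

lemma Sf_neg (lam t : ℝ) : Sf lam (-t) = -Sf lam t := by
  unfold Sf; rcases lt_trichotomy 0 lam with h|h|h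
  · simp [h, mul_neg, Real.sin_neg, neg_div]
  · subst h; simp
  · simp [not_lt.mpr h.le, ne_of_lt h, mul_neg, Real.sinh_neg, neg_div]

lemma Cf_neg (lam t : ℝ) : Cf lam (-t) = Cf lam t := by
  unfold Cf; rcases lt_trichotomy 0 lam with h|h|h
  · simp [h, mul_neg, Real.cos_neg]
  · subst h; simp
  · simp [not_lt.mpr h.le, ne_of_lt h, mul_neg, Real.cosh_neg]

lemma sqrt_pos_of_neg {lam : ℝ} (h : lam < 0) : 0 < Real.sqrt (-lam) :=
  Real.sqrt_pos.mpr (by linarith)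

lemma hasDerivAt_Sf (lam t : ℝ) : HasDerivAt (Sf lam) (Cf lam t) t := by
  unfold Sf Cf
  rcases lt_trichotomy 0 lam with h|h|h
  · simp only [if_pos h]
    have hs : Real.sqrt lam ≠ 0 := (Real.sqrt_pos.mpr h).ne'
    have := (((Real.hasDerivAt_sin (Real.sqrt lam * t)).comp t
      ((hasDerivAt_id t).const_mul (Real.sqrt lam)))).div_const (Real.sqrt lam)
    refine this.congr_deriv (Eq.symm ?_)
    field_simp
  · subst h; simp only [lt_irrefl, if_neg, if_pos rfl, reduceIte]
    exact hasDerivAt_id' t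
  · simp only [if_neg (not_lt.mpr h.le), if_neg (ne_of_lt h)]
    have hs : Real.sqrt (-lam) ≠ 0 := (sqrt_pos_of_neg h).ne'
    have := (((Real.hasDerivAt_sinh (Real.sqrt (-lam) * t)).comp t
      ((hasDerivAt_id t).const_mul (Real.sqrt (-lam))))).div_const (Real.sqrt (-lam))
    refine this.congr_deriv (Eq.symm ?_)
    field_simp

lemma hasDerivAt_Cf (lam t : ℝ) : HasDerivAt (Cf lam) (-lam * Sf lam t) t := by
  unfold Sf Cf
  rcases lt_trichotomy 0 lam with h|h|h
  · simp only [if_pos h]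
    have hsq : Real.sqrt lam ^ 2 = lam := Real.sq_sqrt h.le
    have hs : Real.sqrt lam ≠ 0 := (Real.sqrt_pos.mpr h).ne'
    have := ((Real.hasDerivAt_cos (Real.sqrt lam * t)).comp t
      ((hasDerivAt_id t).const_mul (Real.sqrt lam)))
    refine this.congr_deriv (Eq.symm ?_)
    field_simp
    linear_combination (Real.sin (Real.sqrt lam * t)) * hsq
  · subst h; simp only [lt_irrefl, if_neg, if_pos rfl, reduceIte]
    simpa using (hasDerivAt_const t (1:ℝ))
  · simp only [if_neg (not_lt.mpr h.le), if_neg (ne_of_lt h)]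
    have hsq : Real.sqrt (-lam) ^ 2 = -lam := Real.sq_sqrt (by linarith)
    have hs : Real.sqrt (-lam) ≠ 0 := (sqrt_pos_of_neg h).ne'
    have := ((Real.hasDerivAt_cosh (Real.sqrt (-lam) * t)).comp t
      ((hasDerivAt_id t).const_mul (Real.sqrt (-lam))))
    refine this.congr_deriv (Eq.symm ?_)
    field_simp
    linear_combination (-(Real.sinh (Real.sqrt (-lam) * t))) * hsq

lemma Cf_sq_add (lam t : ℝ) : Cf lam t ^ 2 + lam * Sf lam t ^ 2 = 1 := by
  unfold Sf Cf
  rcases lt_trichotomy 0 lam with h|h|h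
  · simp only [if_pos h]
    have hsq : Real.sqrt lam ^ 2 = lam := Real.sq_sqrt h.le
    have hs : Real.sqrt lam ≠ 0 := (Real.sqrt_pos.mpr h).ne'
    have h1 := Real.sin_sq_add_cos_sq (Real.sqrt lam * t)
    rw [div_pow]
    rw [show lam * (Real.sin (Real.sqrt lam * t) ^ 2 / Real.sqrt lam ^ 2)
        = Real.sin (Real.sqrt lam * t) ^ 2 by rw [hsq]; field_simp [ne_of_gt h]]
    linarith
  · subst h; simp
  · simp only [if_neg (not_lt.mpr h.le), if_neg (ne_of_lt h)]
    have hsq : Real.sqrt (-lam) ^ 2 = -lam := Real.sq_sqrt (by linarith)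
    have hs : Real.sqrt (-lam) ≠ 0 := (sqrt_pos_of_neg h).ne'
    have h1 := Real.cosh_sq_sub_sinh_sq (Real.sqrt (-lam) * t)
    rw [div_pow]
    rw [show lam * (Real.sinh (Real.sqrt (-lam) * t) ^ 2 / Real.sqrt (-lam) ^ 2)
        = -Real.sinh (Real.sqrt (-lam) * t) ^ 2 by rw [hsq]; field_simp [ne_of_lt h]]
    linarith

lemma contDiff_Sf (lam : ℝ) : ContDiff ℝ 2 (Sf lam) := by
  unfold Sf
  rcases lt_trichotomy 0 lam with h|h|h
  · simp only [if_pos h]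
    exact (Real.contDiff_sin.comp (contDiff_const.mul contDiff_id)).div_const _
  · subst h; simp only [lt_irrefl, if_neg, if_pos rfl, reduceIte]
    exact contDiff_id
  · simp only [if_neg (not_lt.mpr h.le), if_neg (ne_of_lt h)]
    exact (Real.contDiff_sinh.comp (contDiff_const.mul contDiff_id)).div_const _

noncomputable def Sc (lam t : ℝ) : ℂ := (Sf lam t : ℂ)
noncomputable def Cc (lam t : ℝ) : ℂ := (Cf lam t : ℂ)

lemma hasDerivAt_Sc (lam t : ℝ) : HasDerivAt (Sc lam) ((Cf lam t : ℂ)) t :=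
  (hasDerivAt_Sf lam t).ofReal_comp

lemma hasDerivAt_Cc (lam t : ℝ) : HasDerivAt (Cc lam) (((-lam * Sf lam t : ℝ) : ℂ)) t :=
  (hasDerivAt_Cf lam t).ofReal_comp

/-- derivative facts for `x ↦ A * Sc lam (x - c)` -/
lemma hasDerivAt_AS (lam : ℝ) (A : ℂ) (c x : ℝ) :
    HasDerivAt (fun x => A * Sc lam (x - c)) (A * Cc lam (x - c)) x := by
  have h1 : HasDerivAt (fun x : ℝ => x - c) 1 x := (hasDerivAt_id x).sub_const c
  have h2 := HasDerivAt.scomp x (hasDerivAt_Sc lam (x - c)) h1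
  have := h2.const_mul A
  simpa [Function.comp, Cc] using this

lemma hasDerivAt_AC (lam : ℝ) (A : ℂ) (c x : ℝ) :
    HasDerivAt (fun x => A * Cc lam (x - c)) (A * (-(lam:ℂ) * Sc lam (x - c))) x := by
  have h1 : HasDerivAt (fun x : ℝ => x - c) 1 x := (hasDerivAt_id x).sub_const c
  have h2 := HasDerivAt.scomp x (hasDerivAt_Cc lam (x - c)) h1
  have := h2.const_mul A
  have h3 : HasDerivAt (fun x => A * Cc lam (x - c)) (A * ((1:ℝ) • ((-lam * Sf lam (x - c) : ℝ) : ℂ))) x := by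
    simpa [Function.comp] using this
  convert h3 using 1
  push_cast [Sc]
  simp only [one_smul]

lemma deriv_AS (lam : ℝ) (A : ℂ) (c : ℝ) :
    deriv (fun x => A * Sc lam (x - c)) = fun x => A * Cc lam (x - c) := by
  funext x; exact (hasDerivAt_AS lam A c x).deriv

lemma deriv2_AS (lam : ℝ) (A : ℂ) (c x : ℝ) :
    deriv (deriv (fun x => A * Sc lam (x - c))) x = -(lam:ℂ) * (A * Sc lam (x - c)) := by
  rw [deriv_AS]
  have := (hasDerivAt_AC lam A c x).deriv
  rw [this]; ring

lemma contDiff_AS (lam : ℝ) (A : ℂ) (c : ℝ) :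
    ContDiff ℝ 2 (fun x => A * Sc lam (x - c)) := by
  have h1 : ContDiff ℝ 2 (fun x : ℝ => Sc lam (x - c)) := by
    exact (Complex.ofRealCLM.contDiff.comp (contDiff_Sf lam)).comp
      (contDiff_id.sub contDiff_const)
  exact contDiff_const.mul h1

/-- constancy on an interval from vanishing derivative -/
lemma eq_on_Icc_of_deriv_zero {f : ℝ → ℂ} (hf : Differentiable ℝ f) {a b : ℝ}
    (hd : ∀ x ∈ Set.Icc a b, deriv f x = 0) :
    ∀ x ∈ Set.Icc a b, ∀ y ∈ Set.Icc a b, f x = f y := by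
  have key := constant_of_has_deriv_right_zero (f := f) (a := a) (b := b)
    (hf.continuous.continuousOn)
    (fun x hx => by
      have : deriv f x = 0 := hd x ⟨hx.1, hx.2.le⟩
      have h2 := (hf x).hasDerivAt
      rw [this] at h2
      exact h2.hasDerivWithinAt)
  intro x hx y hy
  rw [key x hx, key y hy]

lemma rep {lam : ℝ} {v : ℝ → ℂ} (hv : ContDiff ℝ 2 v) {a b c : ℝ}
    (hc : c ∈ Set.Icc a b)
    (hode : ∀ x ∈ Set.Icc a b, deriv (deriv v) x = -(lam:ℂ) * v x)
    (hv0 : v c = 0) :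
    ∀ x ∈ Set.Icc a b, v x = deriv v c * Sc lam (x - c) ∧
      deriv v x = deriv v c * Cc lam (x - c) := by
  have h2 : ContDiff ℝ ((1:ℕ∞)+1) v := by norm_num; exact_mod_cast hv
  have hdd := contDiff_succ_iff_deriv.mp h2
  have hd1 : Differentiable ℝ v := hdd.1
  have hd2 : Differentiable ℝ (deriv v) := hdd.2.2.differentiable (by norm_num)
  set S : ℝ → ℂ := fun x => Sc lam (x - c) with hS
  set C : ℝ → ℂ := fun x => Cc lam (x - c) with hC
  have hSd : ∀ x, HasDerivAt S (C x) x := by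
    intro x
    have := hasDerivAt_AS lam 1 c x
    simpa [hS, hC] using this
  have hCd : ∀ x, HasDerivAt C (-(lam:ℂ) * S x) x := by
    intro x
    have := hasDerivAt_AC lam 1 c x
    simpa [hS, hC] using this
  have hS0 : S c = 0 := by simp [hS, Sc, Sf_zero]
  have hC0 : C c = 1 := by simp [hC, Cc, Cf_zero]
  have hpy : ∀ x, C x ^ 2 + (lam:ℂ) * S x ^ 2 = 1 := by
    intro x
    have := Cf_sq_add lam (x - c)
    have : ((Cf lam (x - c) ^ 2 + lam * Sf lam (x - c) ^ 2 : ℝ) : ℂ) = 1 := by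
      rw [this]; norm_num
    push_cast at this
    simpa [hS, hC, Sc, Cc] using this
  have hSdiff : Differentiable ℝ S := fun x => (hSd x).differentiableAt
  have hCdiff : Differentiable ℝ C := fun x => (hCd x).differentiableAt
  -- Wronskian W1 = v C - v' S
  set W1 : ℝ → ℂ := fun x => v x * C x - deriv v x * S x with hW1
  have hW1diff : Differentiable ℝ W1 := (hd1.mul hCdiff).sub (hd2.mul hSdiff)
  have hW1deriv : ∀ x ∈ Set.Icc a b, deriv W1 x = 0 := by
    intro x hx
    have h1 : HasDerivAt W1 ((deriv v x * C x + v x * (-(lam:ℂ) * S x))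
        - (deriv (deriv v) x * S x + deriv v x * C x)) x :=
      (((hd1 x).hasDerivAt.mul (hCd x))).sub (((hd2 x).hasDerivAt.mul (hSd x)))
    rw [h1.deriv, hode x hx]
    ring
  have hW1c : ∀ x ∈ Set.Icc a b, W1 x = -deriv v c * (0:ℂ) := by
    intro x hx
    have := eq_on_Icc_of_deriv_zero hW1diff hW1deriv x hx c hc
    rw [this]
    simp [hW1, hS0, hC0, hv0]
  -- Wronskian W2 = v * (-lam S) - v' C
  set W2 : ℝ → ℂ := fun x => v x * (-(lam:ℂ) * S x) - deriv v x * C x with hW2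
  have hW2diff : Differentiable ℝ W2 :=
    (hd1.mul (hSdiff.const_mul _)).sub (hd2.mul hCdiff)
  have hW2deriv : ∀ x ∈ Set.Icc a b, deriv W2 x = 0 := by
    intro x hx
    have h1 : HasDerivAt W2 ((deriv v x * (-(lam:ℂ) * S x) + v x * (-(lam:ℂ) * C x))
        - (deriv (deriv v) x * C x + deriv v x * (-(lam:ℂ) * S x))) x := by
      have hs2 : HasDerivAt (fun x => -(lam:ℂ) * S x) (-(lam:ℂ) * C x) x :=
        (hSd x).const_mul _
      exact ((hd1 x).hasDerivAt.mul hs2).sub ((hd2 x).hasDerivAt.mul (hCd x))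
    rw [h1.deriv, hode x hx]
    ring
  have hW2c : ∀ x ∈ Set.Icc a b, W2 x = -deriv v c := by
    intro x hx
    have := eq_on_Icc_of_deriv_zero hW2diff hW2deriv x hx c hc
    rw [this]
    simp [hW2, hS0, hC0, hv0]
  intro x hx
  have e1 : v x * C x - deriv v x * S x = -deriv v c * 0 := hW1c x hx
  have e2 : v x * (-(lam:ℂ) * S x) - deriv v x * C x = -deriv v c := hW2c x hx
  have e3 := hpy x
  constructor
  · linear_combination (C x) * e1 - (S x) * e2 - (v x) * e3
  · linear_combination (-(lam:ℂ) * S x) * e1 - (C x) * e2 - (deriv v x) * e3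

lemma PiD_sqrt {d lam : ℝ} (hd : 0 < d) (h : lam ∈ PiD d) :
    0 < lam ∧ ∃ k : ℕ, 1 ≤ k ∧ Real.sqrt lam = 2 * Real.pi * k / d := by
  obtain ⟨k, hk, hlam⟩ := h
  have hkpos : (0:ℝ) < k := by exact_mod_cast hk
  have hbase : 0 < 2 * Real.pi * k / d := by positivity
  constructor
  · rw [hlam]; positivity
  · exact ⟨k, hk, by rw [hlam, Real.sqrt_sq hbase.le]⟩

lemma Sf_half_eq_zero_iff {d lam : ℝ} (hd : 0 < d) :
    Sf lam (d / 2) = 0 ↔ lam ∈ PiD d := by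
  constructor
  · intro h0
    unfold Sf at h0
    rcases lt_trichotomy 0 lam with h|h|h
    · rw [if_pos h] at h0
      have hs : 0 < Real.sqrt lam := Real.sqrt_pos.mpr h
      have hsin : Real.sin (Real.sqrt lam * (d/2)) = 0 := by
        rcases div_eq_zero_iff.mp h0 with h0|h0
        · exact h0
        · exact absurd h0 hs.ne'
      obtain ⟨n, hn⟩ := Real.sin_eq_zero_iff.mp hsin
      have hpos : (0:ℝ) < Real.sqrt lam * (d/2) := by positivity
      have hnpos : 0 < n := by
        by_contra hc
        push_neg at hc
        have : (n:ℝ) * Real.pi ≤ 0 := by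
          have : (n:ℝ) ≤ 0 := by exact_mod_cast hc
          have hpi := Real.pi_pos
          nlinarith
        linarith [hn ▸ hpos]
      refine ⟨n.toNat, by omega, ?_⟩
      have hcast : ((n.toNat : ℕ) : ℝ) = (n : ℝ) := by
        have : (n.toNat : ℤ) = n := Int.toNat_of_nonneg hnpos.le
        exact_mod_cast this
      have hsqrt : Real.sqrt lam = 2 * Real.pi * n.toNat / d := by
        rw [hcast]
        field_simp
        nlinarith [hn]
      rw [← Real.sq_sqrt h.le, hsqrt]
    · exfalso; subst h; rw [if_neg (lt_irrefl 0), if_pos rfl] at h0; linarith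
    · exfalso
      rw [if_neg (not_lt.mpr h.le), if_neg (ne_of_lt h)] at h0
      have hs : 0 < Real.sqrt (-lam) := sqrt_pos_of_neg h
      have : 0 < Real.sinh (Real.sqrt (-lam) * (d/2)) :=
        Real.sinh_pos_iff.mpr (by positivity)
      have := div_pos this hs
      linarith
  · intro h
    obtain ⟨hpos, k, hk, hsqrt⟩ := PiD_sqrt hd h
    unfold Sf
    rw [if_pos hpos, hsqrt]
    have : 2 * Real.pi * k / d * (d / 2) = k * Real.pi := by field_simp
    rw [this, Real.sin_nat_mul_pi, zero_div]

lemma Sf_full_eq_zero {d lam : ℝ} (hd : 0 < d) (h : lam ∈ PiD d) : Sf lam d = 0 := by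
  obtain ⟨hpos, k, hk, hsqrt⟩ := PiD_sqrt hd h
  unfold Sf
  rw [if_pos hpos, hsqrt]
  have : 2 * Real.pi * k / d * d = (2 * k : ℕ) * Real.pi := by push_cast; field_simp
  rw [this, Real.sin_nat_mul_pi, zero_div]

lemma FD_eq {d lam : ℝ} (hd : 0 < d) :
    FD d lam = -2 * Cf lam (d / 2) / Sf lam (d / 2) := by
  unfold FD Sf Cf
  rcases lt_trichotomy 0 lam with h|h|h
  · rw [if_pos h, if_pos h, if_pos h]
    have harg : Real.sqrt lam * (d/2) = d * Real.sqrt lam / 2 := by ring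
    rw [harg, div_div_eq_mul_div]
    ring
  · subst h
    simp only [lt_irrefl, reduceIte, if_pos rfl]
    rw [div_div_eq_mul_div]
    field_simp
    norm_num
  · rw [if_neg (not_lt.mpr h.le), if_neg (ne_of_lt h),
      if_neg (not_lt.mpr h.le), if_neg (ne_of_lt h),
      if_neg (not_lt.mpr h.le), if_neg (ne_of_lt h)]
    have harg : Real.sqrt (-lam) * (d/2) = d * Real.sqrt (-lam) / 2 := by ring
    rw [harg, div_div_eq_mul_div]
    ring

lemma Sc_zero (lam : ℝ) : Sc lam 0 = 0 := by simp [Sc, Sf_zero]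
lemma Sc_neg (lam t : ℝ) : Sc lam (-t) = -Sc lam t := by
  simp [Sc, Sf_neg]
lemma Cc_neg (lam t : ℝ) : Cc lam (-t) = Cc lam t := by
  simp [Cc, Cf_neg]

/-- A δ-Dirichlet eigenfunction for `(α, λ)` on `[x₋, x₊]` exists if and only if
`λ ∈ Π_d^D` or (`λ ∉ Π_d^D` and `F_d^D(λ) = α`), where `d = x₊ - x₋`. -/
theorem stmt5 (xm xp : ℝ) (h : xm < xp) (α lam : ℝ) :
    (∃ u : ℝ → ℂ, IsDeltaDirichletEF xm xp α lam u) ↔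
      (lam ∈ PiD (xp - xm) ∨ (lam ∉ PiD (xp - xm) ∧ FD (xp - xm) lam = α)) := by
  have hd : (0:ℝ) < xp - xm := by linarith
  set y : ℝ := (xm + xp) / 2 with hy
  have hmy : xm ≤ y := by rw [hy]; linarith
  have hyp : y ≤ xp := by rw [hy]; linarith
  have hylt : y < xp := by rw [hy]; linarith
  have hyxm : y - xm = (xp - xm) / 2 := by rw [hy]; ring
  have hyxp : y - xp = -((xp - xm) / 2) := by rw [hy]; ring
  constructor
  · rintro ⟨u, hcont, ⟨x0, hx0, hx0ne⟩, hum, hup, v, w, hv2, hw2, huv, huw, hodev, hodew, hjump⟩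
    rw [← hy] at huv huw hodev hodew hjump
    have hodev' : ∀ x ∈ Set.Icc xm y, deriv (deriv v) x = -(lam:ℂ) * v x := by
      intro x hx; have := hodev x hx; linear_combination -this
    have hodew' : ∀ x ∈ Set.Icc y xp, deriv (deriv w) x = -(lam:ℂ) * w x := by
      intro x hx; have := hodew x hx; linear_combination -this
    have hvm : v xm = 0 := by rw [← huv ⟨le_refl xm, hmy⟩]; exact hum
    have hwp : w xp = 0 := by rw [← huw ⟨hyp, le_refl xp⟩]; exact hup
    have repv := rep hv2 (a := xm) (b := y) ⟨le_refl xm, hmy⟩ hodev' hvm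
    have repw := rep hw2 (a := y) (b := xp) ⟨hyp, le_refl xp⟩ hodew' hwp
    set A : ℂ := deriv v xm with hA
    set B : ℂ := deriv w xp with hB
    have hyy : y ∈ Set.Icc xm y := ⟨hmy, le_refl y⟩
    have hyy' : y ∈ Set.Icc y xp := ⟨le_refl y, hyp⟩
    have hvy : v y = A * Sc lam ((xp - xm)/2) := by
      have := (repv y hyy).1; rwa [hyxm] at this
    have hvy' : deriv v y = A * Cc lam ((xp - xm)/2) := by
      have := (repv y hyy).2; rwa [hyxm] at this
    have hwy : w y = -(B * Sc lam ((xp - xm)/2)) := by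
      have := (repw y hyy').1; rw [hyxp, Sc_neg] at this; rw [this]; ring
    have hwy' : deriv w y = B * Cc lam ((xp - xm)/2) := by
      have := (repw y hyy').2; rwa [hyxp, Cc_neg] at this
    have huy1 : u y = A * Sc lam ((xp - xm)/2) := by rw [huv hyy]; exact hvy
    have huy2 : u y = -(B * Sc lam ((xp - xm)/2)) := by rw [huw hyy']; exact hwy
    have hAB : A ≠ 0 ∨ B ≠ 0 := by
      by_contra hc
      push_neg at hc
      apply hx0ne
      rcases le_total x0 y with hx0y | hyx0
      · rw [huv ⟨hx0.1, hx0y⟩, (repv x0 ⟨hx0.1, hx0y⟩).1, hc.1, zero_mul]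
      · rw [huw ⟨hyx0, hx0.2⟩, (repw x0 ⟨hyx0, hx0.2⟩).1, hc.2, zero_mul]
    by_cases hSz : Sf lam ((xp - xm)/2) = 0
    · left
      exact (Sf_half_eq_zero_iff hd).mp hSz
    · right
      refine ⟨fun hmem => hSz ((Sf_half_eq_zero_iff hd).mpr hmem), ?_⟩
      have hScz : Sc lam ((xp - xm)/2) ≠ 0 := by
        simpa [Sc] using (Complex.ofReal_ne_zero.mpr hSz)
      have hBA : B = -A := by
        have : (A + B) * Sc lam ((xp - xm)/2) = 0 := by
          have := huy1.symm.trans huy2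
          linear_combination this
        rcases mul_eq_zero.mp this with h1 | h1
        · linear_combination h1
        · exact absurd h1 hScz
      have hAne : A ≠ 0 := by
        rcases hAB with h1 | h1
        · exact h1
        · intro hA0; exact h1 (by rw [hBA, hA0, neg_zero])
      have hkey : (-2 : ℂ) * Cc lam ((xp - xm)/2) = (α : ℂ) * Sc lam ((xp - xm)/2) := by
        have hj := hjump
        rw [hwy', hvy', huy1, hBA] at hj
        have : A * ((-2 : ℂ) * Cc lam ((xp - xm)/2) - (α : ℂ) * Sc lam ((xp - xm)/2)) = 0 := by
          linear_combination hj
        rcases mul_eq_zero.mp this with h1 | h1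
        · exact absurd h1 hAne
        · linear_combination h1
      have hkeyR : (-2 : ℝ) * Cf lam ((xp - xm)/2) = α * Sf lam ((xp - xm)/2) := by
        simp only [Cc, Sc] at hkey
        exact_mod_cast hkey
      rw [FD_eq hd]
      field_simp
      linarith
  · rintro (hmem | ⟨hmem, hFD⟩)
    · -- lam ∈ PiD
      obtain ⟨hpos, k, hk, hsqrt⟩ := PiD_sqrt hd hmem
      have hkR : (0:ℝ) < k := by exact_mod_cast hk
      refine ⟨fun x => (1:ℂ) * Sc lam (x - xm), ?_, ?_, ?_, ?_, ?_⟩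
      · exact (contDiff_AS lam 1 xm).continuous.continuousOn
      · have hq : 0 < (xp - xm) / (4 * k) := by positivity
        have hq2 : (xp - xm) / (4 * k) ≤ xp - xm :=
          div_le_self hd.le (by have h1 : (1:ℝ) ≤ k := by exact_mod_cast hk
                                linarith)
        refine ⟨xm + (xp - xm) / (4 * k), ⟨by linarith, by linarith⟩, ?_⟩
        have harg : Real.sqrt lam * ((xp - xm) / (4 * k)) = Real.pi / 2 := by
          rw [hsqrt]; field_simp; ring
        have : Sf lam ((xp - xm) / (4 * k)) = 1 / Real.sqrt lam := by
          unfold Sf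
          rw [if_pos hpos, harg, Real.sin_pi_div_two]
        simp only [add_sub_cancel_left, one_mul]
        rw [Sc, this]
        have : Real.sqrt lam ≠ 0 := (Real.sqrt_pos.mpr hpos).ne'
        simp [this]
      · simp [Sc_zero]
      · simp only [one_mul]
        rw [Sc, Sf_full_eq_zero hd hmem]
        simp
      · refine ⟨fun x => (1:ℂ) * Sc lam (x - xm), fun x => (1:ℂ) * Sc lam (x - xm),
          contDiff_AS lam 1 xm, contDiff_AS lam 1 xm,
          fun x _ => rfl, fun x _ => rfl, ?_, ?_, ?_⟩
        · intro x _
          rw [deriv2_AS lam 1 xm x]; ring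
        · intro x _
          rw [deriv2_AS lam 1 xm x]; ring
        · rw [sub_self]
          have hz : Sc lam (y - xm) = 0 := by
            rw [hyxm, Sc, (Sf_half_eq_zero_iff hd).mpr hmem]; norm_num
          show (0:ℂ) = (α:ℂ) * ((1:ℂ) * Sc lam (y - xm))
          rw [hz]; ring
    · -- FD = α
      have hSz : Sf lam ((xp - xm)/2) ≠ 0 :=
        fun h0 => hmem ((Sf_half_eq_zero_iff hd).mp h0)
      have hkeyR : (-2 : ℝ) * Cf lam ((xp - xm)/2) = α * Sf lam ((xp - xm)/2) := by
        rw [FD_eq hd] at hFD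
        field_simp at hFD
        linarith
      classical
      set u : ℝ → ℂ := fun x => if x ≤ y then (1:ℂ) * Sc lam (x - xm)
        else (-1:ℂ) * Sc lam (x - xp) with hu
      have hucont : Continuous u := by
        rw [hu]
        refine Continuous.if_le ?_ ?_ continuous_id continuous_const ?_
        · exact (contDiff_AS lam 1 xm).continuous
        · exact (contDiff_AS lam (-1) xp).continuous
        · intro x hx
          rw [hx]
          rw [hyxm, hyxp, Sc_neg]
          ring
      have huy : u y = Sc lam ((xp - xm)/2) := by
        rw [hu]; simp only [le_refl, if_pos, one_mul]; rw [hyxm]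
      refine ⟨u, hucont.continuousOn, ⟨y, ⟨hmy, hyp⟩, ?_⟩, ?_, ?_, ?_⟩
      · rw [huy]
        simpa [Sc] using (Complex.ofReal_ne_zero.mpr hSz)
      · rw [hu]; simp only [if_pos hmy]; simp [Sc_zero]
      · rw [hu]; simp only [if_neg (not_le.mpr hylt)]; simp [Sc_zero]
      · refine ⟨fun x => (1:ℂ) * Sc lam (x - xm), fun x => (-1:ℂ) * Sc lam (x - xp),
          contDiff_AS lam 1 xm, contDiff_AS lam (-1) xp, ?_, ?_, ?_, ?_, ?_⟩
        · intro x hx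
          have hx' : x ∈ Set.Icc xm y := hx
          rw [hu]; simp only [if_pos hx'.2]
        · intro x hx
          have hx' : x ∈ Set.Icc y xp := hx
          rcases lt_or_eq_of_le hx'.1 with h1 | h1
          · rw [hu]; simp only [if_neg (not_le.mpr h1)]
          · rw [hu, ← h1]; simp only [le_refl, if_pos]
            rw [hyxm, hyxp, Sc_neg]; ring
        · intro x _
          rw [deriv2_AS lam 1 xm x]; ring
        · intro x _
          rw [deriv2_AS lam (-1) xp x]; ring
        · show deriv (fun x => (-1:ℂ) * Sc lam (x - xp)) y
              - deriv (fun x => (1:ℂ) * Sc lam (x - xm)) y = (α:ℂ) * u y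
          rw [(hasDerivAt_AS lam 1 xm y).deriv, (hasDerivAt_AS lam (-1) xp y).deriv]
          rw [hyxm, hyxp, Cc_neg, huy]
          have : ((-2 : ℝ) * Cf lam ((xp - xm)/2) : ℂ) = ((α * Sf lam ((xp - xm)/2) : ℝ) : ℂ) := by
            exact_mod_cast congrArg Complex.ofReal hkeyR
          push_cast at this
          rw [Cc, Sc]
          linear_combination this
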